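/- arXiv:1412.6822 — 2 statements merged into one kernel-verified Lean document; each statement's English description precedes it below -/
import Mathlib

section
/- The reflection map ω ↦ ω̃ defined by ω̃(n) := ω(1−n) maps Ω_τ into itself, is a continuous involution of Ω_τ, and has no fixed point: ω̃ ≠ ω for every ω ∈ Ω_τ. -/
/-- The four-letter alphabet `A = {a, x, y, z}`. -/
inductive A : Type
  | a | x | y | z
  deriving DecidableEq, Repr

/-- The substitution `τ : a ↦ axa, x ↦ y, y ↦ z, z ↦ x`. -/
def tau : A → List A
  | A.a => [A.a, A.x, A.a]
  | A.x => [A.y]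
  | A.y => [A.z]
  | A.z => [A.x]

/-- The substitution `τ` extended to finite words by concatenation. -/
def tauW (w : List A) : List A := w.flatMap tau

/-- `pw n = τⁿ(a)`, a word of length `2^(n+1) - 1`. -/
def pw : ℕ → List A
  | 0 => [A.a]
  | n + 1 => tauW (pw n)

/-- The fixed point `η` of `τ`: the unique one-sided infinite word having every
`τⁿ(a)` as a prefix.  (Since `pw (n+1)` has length `2^(n+2) - 1 > n`, reading its
`n`-th letter is well defined and independent of the choice of a large enough iterate.) -/
def eta (n : ℕ) : A := (pw (n + 1)).getD n A.a

/-- `w` is a (finite) factor of `η`. -/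
def IsFactorEta (w : List A) : Prop :=
  ∃ i : ℕ, w = (List.range w.length).map (fun k => eta (i + k))

/-- `Ω_τ`: the set of two-sided sequences all of whose finite factors are factors of `η`. -/
def OmegaTau (ω : ℤ → A) : Prop :=
  ∀ (i : ℤ) (n : ℕ), IsFactorEta ((List.range n).map (fun k => ω (i + k)))

instance : TopologicalSpace A := ⊥
instance : DiscreteTopology A := ⟨rfl⟩

/-!
`τ(a) = axa` is a palindrome and `τ` maps the other letters to single letters, so every `τⁿ(a)`
is a palindrome. Every factor of `η` lies inside some `τⁿ(a)`, hence factors of `η` are closed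
under reversal, which is exactly what the reflection needs to preserve `Ω_τ`. Moreover `τⁿ(a)` has
the shape `a b₁ a b₂ ⋯ a bₘ a` with all `bᵢ ≠ a`, so `η` has no factor `cc`; a fixed point would
satisfy `ω(0) = ω(1)`.
-/

section Reflection

variable {α : Type*}

def reflect (ω : ℤ → α) : ℤ → α := fun n => ω (1 - n)

theorem reflect_reflect (ω : ℤ → α) : reflect (reflect ω) = ω := by
  funext n
  simp [reflect]

theorem continuous_reflect [TopologicalSpace α] : Continuous (reflect : (ℤ → α) → ℤ → α) :=
  continuous_pi fun n => continuous_apply (1 - n)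

def window (ω : ℤ → α) (i : ℤ) (n : ℕ) : List α :=
  (List.range n).map fun k : ℕ => ω (i + k)

theorem window_reflect (ω : ℤ → α) (i : ℤ) (n : ℕ) :
    window (reflect ω) i n = (window ω (2 - i - n) n).reverse := by
  apply List.ext_getElem (by simp [window])
  intro k hk _
  simp only [window, List.length_map, List.length_range] at hk
  simp only [window, reflect, List.getElem_reverse, List.getElem_map, List.getElem_range,
    List.length_map, List.length_range]
  congr 1
  omega

end Reflection

theorem tauW_append (u v : List A) : tauW (u ++ v) = tauW u ++ tauW v :=
  List.flatMap_append

theorem reverse_tauW (w : List A) : (tauW w).reverse = tauW w.reverse := by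
  induction w with
  | nil => rfl
  | cons c w ih =>
    have hc : (tau c).reverse = tau c := by cases c <;> rfl
    simp only [tauW, List.flatMap_cons, List.reverse_append, List.reverse_cons,
      List.flatMap_append] at ih ⊢
    simp [ih, hc]

theorem reverse_pw (n : ℕ) : (pw n).reverse = pw n := by
  induction n with
  | zero => rfl
  | succ n ih => rw [pw, reverse_tauW, ih]

theorem pw_prefix_pw_succ (n : ℕ) : pw n <+: pw (n + 1) := by
  induction n with
  | zero => exact ⟨[A.x, A.a], rfl⟩
  | succ n ih =>
    obtain ⟨t, ht⟩ := ih
    exact ⟨tauW t, by rw [pw, pw, ← ht, tauW_append]⟩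

theorem pw_prefix_pw {m n : ℕ} (h : m ≤ n) : pw m <+: pw n := by
  induction n, h using Nat.le_induction with
  | base => exact List.prefix_refl _
  | succ n _ ih => exact ih.trans (pw_prefix_pw_succ n)

def sepByA : List A → List A
  | [] => [A.a]
  | b :: bs => A.a :: b :: sepByA bs

theorem tauW_sepByA {bs : List A} (h : ∀ b ∈ bs, b ≠ A.a) :
    tauW (sepByA bs) = sepByA (A.x :: bs.flatMap fun b => tau b ++ [A.x]) := by
  induction bs with
  | nil => rfl
  | cons b bs ih =>
    obtain ⟨hb, hbs⟩ := List.forall_mem_cons.mp h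
    cases b <;> simp_all [sepByA, tauW, tau]

theorem isChain_ne_sepByA {bs : List A} (h : ∀ b ∈ bs, b ≠ A.a) :
    (sepByA bs).IsChain (· ≠ ·) := by
  induction bs with
  | nil => exact List.isChain_singleton _
  | cons b bs ih =>
    obtain ⟨hb, hbs⟩ := List.forall_mem_cons.mp h
    have hhead : sepByA bs = A.a :: (sepByA bs).tail := by cases bs <;> rfl
    rw [sepByA, List.isChain_cons_cons, hhead, List.isChain_cons_cons, ← hhead]
    exact ⟨hb.symm, hb, ih hbs⟩

theorem exists_pw_eq_sepByA (n : ℕ) :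
    ∃ bs : List A, n ≤ bs.length ∧ (∀ b ∈ bs, b ≠ A.a) ∧ pw n = sepByA bs := by
  induction n with
  | zero => exact ⟨[], le_rfl, by simp, rfl⟩
  | succ n ih =>
    obtain ⟨bs, hlen, hbs, hpw⟩ := ih
    refine ⟨A.x :: bs.flatMap fun b => tau b ++ [A.x], ?_, ?_, by rw [pw, hpw, tauW_sepByA hbs]⟩
    · have : bs.length ≤ (bs.flatMap fun b => tau b ++ [A.x]).length := by
        clear hlen hbs hpw
        induction bs <;> simp [*]
        omega
      simp only [List.length_cons]
      omega
    · intro b hb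
      simp only [List.mem_cons, List.mem_flatMap, List.mem_append] at hb
      rcases hb with rfl | ⟨c, hc, hb⟩
      · simp
      · have := hbs c hc
        cases c <;> simp_all [tau] <;> rcases hb with rfl | rfl <;> simp

theorem length_sepByA (bs : List A) : (sepByA bs).length = 2 * bs.length + 1 := by
  induction bs with
  | nil => rfl
  | cons b bs ih => simp only [sepByA, List.length_cons, ih]; ring

theorem lt_length_pw (n : ℕ) : n < (pw n).length := by
  obtain ⟨bs, hlen, -, hpw⟩ := exists_pw_eq_sepByA n
  rw [hpw, length_sepByA]
  omega

theorem isChain_ne_pw (n : ℕ) : (pw n).IsChain (· ≠ ·) := by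
  obtain ⟨bs, -, hbs, hpw⟩ := exists_pw_eq_sepByA n
  exact hpw ▸ isChain_ne_sepByA hbs

theorem eta_eq_getElem_pw {i n : ℕ} (h : i < (pw n).length) : eta i = (pw n)[i] := by
  have hi : i < (pw (i + 1)).length := (lt_length_pw (i + 1)).trans' (Nat.lt_succ_self i)
  rw [eta, List.getD_eq_getElem _ _ hi, (pw_prefix_pw (le_max_left (i + 1) n)).getElem hi,
    (pw_prefix_pw (le_max_right (i + 1) n)).getElem h]

theorem eta_ne_eta_succ (i : ℕ) : eta i ≠ eta (i + 1) := by
  have h : i + 1 < (pw (i + 1)).length := lt_length_pw (i + 1)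
  rw [eta_eq_getElem_pw h, eta_eq_getElem_pw (Nat.lt_of_succ_lt h)]
  exact (isChain_ne_pw (i + 1)).getElem i h

theorem take_pw {m n : ℕ} (h : m ≤ (pw n).length) : (pw n).take m = (List.range m).map eta := by
  apply List.ext_getElem (by simpa using h)
  intro k hk _
  simp only [List.getElem_take, List.getElem_map, List.getElem_range]
  exact (eta_eq_getElem_pw _).symm

theorem map_eta_range_add (i l : ℕ) :
    (List.range (i + l)).map eta = (List.range i).map eta ++ (List.range l).map fun k => eta (i + k) := by
  rw [List.range_add, List.map_append, List.map_map]
  rfl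

theorem isFactorEta_iff_exists_infix_pw {w : List A} : IsFactorEta w ↔ ∃ n, w <:+: pw n := by
  constructor
  · rintro ⟨i, hw⟩
    refine ⟨i + w.length, ?_⟩
    have htake := take_pw (lt_length_pw (i + w.length)).le
    rw [map_eta_range_add, ← hw] at htake
    have hprefix : (List.range i).map eta ++ w <+: pw (i + w.length) := htake ▸ List.take_prefix _ _
    exact (List.suffix_append _ _).isInfix.trans hprefix.isInfix
  · rintro ⟨n, s, t, hst⟩
    have hlen : s.length + w.length ≤ (pw n).length := by simp [← hst]
    have hsw : (pw n).take (s.length + w.length) = s ++ w := by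
      rw [← hst, ← List.length_append, List.take_left]
    rw [take_pw hlen, map_eta_range_add] at hsw
    exact ⟨s.length, (List.append_inj hsw.symm (by simp)).2⟩

theorem IsFactorEta.reverse {w : List A} (h : IsFactorEta w) : IsFactorEta w.reverse := by
  obtain ⟨n, hn⟩ := isFactorEta_iff_exists_infix_pw.mp h
  exact isFactorEta_iff_exists_infix_pw.mpr ⟨n, reverse_pw n ▸ hn.reverse⟩

/-- In `OmegaTau` the list `List.range n` is silently coerced to `List ℤ`; `window` avoids this. -/
theorem omegaTau_iff_window {ω : ℤ → A} :
    OmegaTau ω ↔ ∀ (i : ℤ) (n : ℕ), IsFactorEta (window ω i n) := by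
  simp only [OmegaTau, List.bind_eq_flatMap, List.pure_def, ← List.map_eq_flatMap, List.map_map]
  rfl

theorem omegaTau_reflect {ω : ℤ → A} (hω : OmegaTau ω) : OmegaTau (reflect ω) := by
  rw [omegaTau_iff_window] at hω ⊢
  intro i n
  rw [window_reflect]
  exact (hω _ n).reverse

theorem apply_ne_apply_add_one_of_omegaTau {ω : ℤ → A} (hω : OmegaTau ω) (j : ℤ) :
    ω j ≠ ω (j + 1) := by
  obtain ⟨i, hi⟩ := omegaTau_iff_window.mp hω j 2
  obtain ⟨h₀, h₁⟩ : ω j = eta i ∧ ω (j + 1) = eta (i + 1) := by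
    simpa [window, List.range_succ] using hi
  rw [h₀, h₁]
  exact eta_ne_eta_succ i

theorem reflect_ne_self_of_omegaTau {ω : ℤ → A} (hω : OmegaTau ω) : reflect ω ≠ ω := fun h =>
  apply_ne_apply_add_one_of_omegaTau hω 0 (by simpa [reflect] using congrFun h 1)

/-- The reflection `ω ↦ ω̃`, `ω̃(n) = ω(1-n)`, maps `Ω_τ` into itself, induces a
continuous involution of `Ω_τ`, and has no fixed point. -/
theorem reflection_involution_no_fixed_point :
    (∀ ω : ℤ → A, OmegaTau ω → OmegaTau (fun n => ω (1 - n))) ∧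
    (∃ R : {ω : ℤ → A // OmegaTau ω} → {ω : ℤ → A // OmegaTau ω},
      (∀ ω : {ω : ℤ → A // OmegaTau ω}, (R ω).1 = fun n => ω.1 (1 - n)) ∧
      Continuous R ∧ R ∘ R = id) ∧
    (∀ ω : ℤ → A, OmegaTau ω → (fun n => ω (1 - n)) ≠ ω) := by
  refine ⟨fun ω => omegaTau_reflect,
    ⟨fun ω => ⟨reflect ω.1, omegaTau_reflect ω.2⟩, fun _ => rfl, ?_, ?_⟩,
    fun ω => reflect_ne_self_of_omegaTau⟩
  · exact (continuous_reflect.comp continuous_subtype_val).subtype_mk _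
  · funext ω
    exact Subtype.ext (reflect_reflect ω.1)
end

section
/- Let ω ∈ Ω_τ be symmetric around some p ∈ ℤ, i.e., ω(p+k) = ω(p−k) for all k ≥ 1. Then s := ω(p) belongs to {x,y,z} and ω(n) = ω⁽ˢ⁾(n−p) for all n ∈ ℤ; equivalently, for every n ∈ ℕ the word ω(p+1)ω(p+2)⋯ω(p+2ⁿ⁺¹−1) equals p⁽ⁿ⁾. -/
/-- The special two-sided sequence `ω⁽ˢ⁾`, with `ω⁽ˢ⁾(0) = s` and
`ω⁽ˢ⁾(k) = η(|k| - 1)` for `k ≠ 0`. -/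
def omegaS (s : A) : ℤ → A := fun k => if k = 0 then s else eta (k.natAbs - 1)

/-!
The fixed point has a Toeplitz structure: `η(2t) = a` and `η(2t+1) = next (η t)`, where `next`
sends `a ↦ x` and rotates `x ↦ y ↦ z ↦ x`. If `η` is a palindrome of radius `N ≥ 3` around
position `c`, then `c` is odd: for even `c` the four letters at distance `1` and `3` from `c`
would force two letters `z` at distance `2` in `η`, which the structure forbids. For odd
`c = 2e + 1`, the odd positions of the palindrome form, after undoing `next`, a palindrome of
radius `N / 2` around `e`. Iterating `m` times, a palindrome of radius `3 · 2 ^ m` around `c` is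
followed by the prefix of `η` of length `2 ^ m - 1`. A sequence of `Ω_τ` symmetric around `p`
sees such palindromes of every radius around `p`, which pins down every letter.
-/

namespace A

def next : A → A
  | .a => .x
  | .x => .y
  | .y => .z
  | .z => .x

theorem next_ne_a (l : A) : l.next ≠ .a := by
  cases l <;> decide

theorem next_eq_z_iff {l : A} : l.next = .z ↔ l = .y := by
  cases l <;> decide

theorem eq_z_of_next_eq_x {l : A} (hl : l ≠ .a) (h : l.next = .x) : l = .z := by
  cases l <;> simp_all [next]

theorem eq_of_next_eq {u v : A} (hu : u ≠ .a) (hv : v ≠ .a) (h : u.next = v.next) : u = v := by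
  cases u <;> cases v <;> simp_all [next]

end A

theorem tau_of_ne_a {l : A} (hl : l ≠ .a) : tau l = [l.next] := by
  cases l <;> simp_all [tau, A.next]

theorem pw_succ (n : ℕ) : pw (n + 1) = pw n ++ A.next^[n + 1] .a :: pw n := by
  induction n with
  | zero => rfl
  | succ n ih =>
    have hmid : A.next^[n + 1] .a ≠ .a := by
      rw [Function.iterate_succ_apply']
      exact A.next_ne_a _
    conv_lhs => rw [pw, ih]
    rw [Function.iterate_succ_apply' _ (n + 1)]
    simp only [tauW, List.flatMap_append, List.flatMap_cons, tau_of_ne_a hmid]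
    rfl

theorem pw_length (n : ℕ) : (pw n).length = 2 ^ (n + 1) - 1 := by
  induction n with
  | zero => rfl
  | succ n ih =>
    rw [pw_succ, List.length_append, List.length_cons, ih, pow_succ 2 (n + 1)]
    have := Nat.one_le_two_pow (n := n + 1)
    omega

theorem getD_pw_of_le {m n k : ℕ} (hmn : m ≤ n) (hk : k < (pw m).length) :
    (pw m).getD k .a = (pw n).getD k .a := by
  obtain ⟨t, ht⟩ := pw_prefix_pw hmn
  rw [← ht, List.getD_append _ _ _ _ hk]

theorem getD_pw {n k : ℕ} (hk : k < (pw n).length) : (pw n).getD k .a = eta k := by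
  have hk' : k < (pw (k + 1)).length := (Nat.lt_succ_self k).trans (lt_length_pw (k + 1))
  rw [eta, getD_pw_of_le (n := n + k + 1) (by omega) hk,
    getD_pw_of_le (n := n + k + 1) (by omega) hk']

def interleaveA (w : List A) : List A := w.flatMap (fun l => [.a, l.next]) ++ [.a]

theorem interleaveA_append_cons (u v : List A) (l : A) :
    interleaveA (u ++ l :: v) = interleaveA u ++ l.next :: interleaveA v := by
  simp [interleaveA]

theorem getD_interleaveA_two_mul (w : List A) (t : ℕ) : (interleaveA w).getD (2 * t) .a = .a := by
  induction w generalizing t with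
  | nil => cases t <;> simp [interleaveA]
  | cons l w ih =>
    cases t with
    | zero => simp [interleaveA]
    | succ t => simpa [interleaveA, Nat.mul_succ] using ih t

theorem getD_interleaveA_two_mul_add_one {w : List A} {t : ℕ} (ht : t < w.length) :
    (interleaveA w).getD (2 * t + 1) .a = (w.getD t .a).next := by
  induction w generalizing t with
  | nil => simp at ht
  | cons l w ih =>
    cases t with
    | zero => simp [interleaveA]
    | succ t => simpa [interleaveA, Nat.mul_succ] using ih (by simpa using ht)

theorem pw_succ_eq_interleaveA (n : ℕ) : pw (n + 1) = interleaveA (pw n) := by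
  induction n with
  | zero => rfl
  | succ n ih =>
    conv_rhs => rw [pw_succ n]
    rw [pw_succ (n + 1), interleaveA_append_cons, ← ih, Function.iterate_succ_apply']

theorem eta_two_mul (t : ℕ) : eta (2 * t) = .a := by
  rw [eta, pw_succ_eq_interleaveA, getD_interleaveA_two_mul]

theorem eta_two_mul_add_one (t : ℕ) : eta (2 * t + 1) = (eta t).next := by
  have ht : t < (pw (2 * t + 1)).length := by
    have := lt_length_pw (2 * t + 1)
    omega
  rw [eta, pw_succ_eq_interleaveA, getD_interleaveA_two_mul_add_one ht, getD_pw ht]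

theorem eta_eq_a_iff {n : ℕ} : eta n = .a ↔ Even n := by
  obtain ⟨t, rfl | rfl⟩ := Nat.even_or_odd' n
  · simp [eta_two_mul]
  · simp [eta_two_mul_add_one, A.next_ne_a]

theorem next_eta_of_even {k : ℕ} (hk : Even k) : (eta k).next = .x := by
  rw [eta_eq_a_iff.2 hk]
  rfl

theorem eta_eq_z_of_odd {k : ℕ} (hk : Odd k) (h : (eta k).next = .x) : eta k = .z :=
  A.eq_z_of_next_eq_x (mt eta_eq_a_iff.1 (Nat.not_even_iff_odd.2 hk)) h

theorem eta_eq_of_next_eq {k l : ℕ} (hkl : Even k ↔ Even l) (h : (eta k).next = (eta l).next) :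
    eta k = eta l := by
  by_cases hk : Even k
  · rw [eta_eq_a_iff.2 hk, eta_eq_a_iff.2 (hkl.1 hk)]
  · exact A.eq_of_next_eq (mt eta_eq_a_iff.1 hk) (mt eta_eq_a_iff.1 (mt hkl.2 hk)) h

theorem eta_add_two_ne_z {k : ℕ} (hk : eta k = .z) : eta (k + 2) ≠ .z := by
  obtain ⟨s, rfl | rfl⟩ := Nat.even_or_odd' k
  · simp [eta_two_mul] at hk
  · intro h
    rw [show 2 * s + 1 + 2 = 2 * (s + 1) + 1 by ring, eta_two_mul_add_one, A.next_eq_z_iff] at h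
    rw [eta_two_mul_add_one, A.next_eq_z_iff] at hk
    rcases Nat.even_or_odd s with hs | hs
    · simp [eta_eq_a_iff.2 hs] at hk
    · simp [eta_eq_a_iff.2 hs.add_one] at h

def IsEtaPalindrome (c N : ℕ) : Prop := N ≤ c ∧ ∀ j ≤ N, eta (c + j) = eta (c - j)

namespace IsEtaPalindrome

variable {c e N : ℕ}

theorem odd (h : IsEtaPalindrome c N) (hN : 3 ≤ N) : Odd c := by
  obtain ⟨hNc, hpal⟩ := h
  by_contra hc
  obtain ⟨e, rfl⟩ := (Nat.not_odd_iff_even.1 hc).two_dvd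
  have h1 : (eta e).next = (eta (e - 1)).next := by
    have := hpal 1 (by omega)
    rwa [eta_two_mul_add_one, show 2 * e - 1 = 2 * (e - 1) + 1 by omega,
      eta_two_mul_add_one] at this
  have h3 : (eta (e + 1)).next = (eta (e - 2)).next := by
    have := hpal 3 (by omega)
    rwa [show 2 * e + 3 = 2 * (e + 1) + 1 by ring, show 2 * e - 3 = 2 * (e - 2) + 1 by omega,
      eta_two_mul_add_one, eta_two_mul_add_one] at this
  obtain ⟨s, rfl | rfl⟩ := Nat.even_or_odd' e
  · have hz : eta (2 * s - 1) = .z :=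
      eta_eq_z_of_odd ⟨s - 1, by omega⟩ (h1 ▸ next_eta_of_even ⟨s, by omega⟩)
    have hz' : eta (2 * s + 1) = .z :=
      eta_eq_z_of_odd ⟨s, rfl⟩ (h3.trans (next_eta_of_even ⟨s - 1, by omega⟩))
    exact eta_add_two_ne_z hz (by rwa [show 2 * s - 1 + 2 = 2 * s + 1 by omega])
  · have hz : eta (2 * s + 1) = .z :=
      eta_eq_z_of_odd ⟨s, rfl⟩ (h1.trans (next_eta_of_even ⟨s, by omega⟩))
    have hz' : eta (2 * s + 1 - 2) = .z :=
      eta_eq_z_of_odd ⟨s - 1, by omega⟩ (h3.symm.trans (next_eta_of_even ⟨s + 1, by omega⟩))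
    exact eta_add_two_ne_z hz' (by rwa [show 2 * s + 1 - 2 + 2 = 2 * s + 1 by omega])

theorem half (h : IsEtaPalindrome (2 * e + 1) N) : IsEtaPalindrome e (N / 2) := by
  obtain ⟨hN, hpal⟩ := h
  refine ⟨by omega, fun j hj => eta_eq_of_next_eq ?_ ?_⟩
  · rw [Nat.even_add, Nat.even_sub (by omega)]
  · have := hpal (2 * j) (by omega)
    rwa [show 2 * e + 1 + 2 * j = 2 * (e + j) + 1 by ring,
      show 2 * e + 1 - 2 * j = 2 * (e - j) + 1 by omega, eta_two_mul_add_one,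
      eta_two_mul_add_one] at this

theorem eta_add_eq {m : ℕ} (h : IsEtaPalindrome c N) (hN : 3 * 2 ^ m ≤ N) {j : ℕ}
    (hj : j + 1 < 2 ^ m) : eta (c + 1 + j) = eta j := by
  induction m generalizing c N j with
  | zero => omega
  | succ m ih =>
    rw [pow_succ] at hN hj
    obtain ⟨e, rfl⟩ := h.odd (by have := Nat.one_le_two_pow (n := m); omega)
    obtain ⟨i, rfl | rfl⟩ := Nat.even_or_odd' j
    · rw [show 2 * e + 1 + 1 + 2 * i = 2 * (e + 1 + i) by ring, eta_two_mul, eta_two_mul]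
    · rw [show 2 * e + 1 + 1 + (2 * i + 1) = 2 * (e + 1 + i) + 1 by ring, eta_two_mul_add_one,
        eta_two_mul_add_one, ih h.half (by omega) (by omega)]

end IsEtaPalindrome

theorem map_range_eta (n : ℕ) : (List.range (2 ^ (n + 1) - 1)).map eta = pw n := by
  refine List.ext_getElem (by simp [pw_length]) fun k _ hk => ?_
  rw [List.getElem_map, List.getElem_range, ← getD_pw hk, List.getD_eq_getElem]

theorem omegaS_natCast_add_one (s : A) (j : ℕ) : omegaS s (j + 1) = eta j := by
  simp [omegaS, show (j : ℤ) + 1 ≠ 0 by omega, show ((j : ℤ) + 1).natAbs = j + 1 by omega]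

theorem omegaS_neg (s : A) (k : ℤ) : omegaS s (-k) = omegaS s k := by
  simp [omegaS]

theorem map_range_natCast {α : Type*} (f : ℤ → α) (n : ℕ) :
    (List.range n).map (fun k => f k) = (List.range n).map (fun k : ℕ => f k) := by
  simp only [List.bind_eq_flatMap, List.pure_def, ← List.map_eq_flatMap, List.map_map]
  rfl

theorem OmegaTau.exists_eta_window {ω : ℤ → A} (hω : OmegaTau ω) (i : ℤ) (n : ℕ) :
    ∃ c : ℕ, ∀ k < n, ω (i + k) = eta (c + k) := by
  obtain ⟨c, hc⟩ := hω i n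
  rw [map_range_natCast, List.length_map, List.length_range, List.map_inj_left] at hc
  exact ⟨c, fun k hk => hc k (List.mem_range.2 hk)⟩

section Symmetric

variable {ω : ℤ → A} {p : ℤ}

theorem OmegaTau.exists_isEtaPalindrome (hω : OmegaTau ω)
    (hsym : ∀ k : ℕ, 1 ≤ k → ω (p + k) = ω (p - k)) (N : ℕ) :
    ∃ c, IsEtaPalindrome c N ∧ ∀ j ≤ N, ω (p + j) = eta (c + j) := by
  obtain ⟨c, hc⟩ := hω.exists_eta_window (p - N) (2 * N + 1)
  have right : ∀ j ≤ N, ω (p + j) = eta (c + N + j) := by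
    intro j hj
    have := hc (N + j) (by omega)
    rwa [show p - N + ((N + j : ℕ) : ℤ) = p + j by push_cast; ring, ← add_assoc] at this
  have left : ∀ j ≤ N, ω (p - j) = eta (c + N - j) := by
    intro j hj
    have := hc (N - j) (by omega)
    rwa [show p - N + ((N - j : ℕ) : ℤ) = p - j by push_cast [Nat.cast_sub hj]; ring,
      show c + (N - j) = c + N - j by omega] at this
  refine ⟨c + N, ⟨by omega, fun j hj => ?_⟩, right⟩
  rcases Nat.eq_zero_or_pos j with rfl | hj0
  · rfl
  · rw [← right j hj, ← left j hj, hsym j hj0]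

theorem OmegaTau.ne_a_of_symm (hω : OmegaTau ω)
    (hsym : ∀ k : ℕ, 1 ≤ k → ω (p + k) = ω (p - k)) : ω p ≠ .a := by
  obtain ⟨c, hc, hωc⟩ := hω.exists_isEtaPalindrome hsym 3
  obtain ⟨e, rfl⟩ := hc.odd le_rfl
  have hcenter : ω p = eta (2 * e + 1) := by simpa using hωc 0 (Nat.zero_le _)
  rw [hcenter, eta_two_mul_add_one]
  exact A.next_ne_a _

theorem OmegaTau.eq_eta_of_symm (hω : OmegaTau ω)
    (hsym : ∀ k : ℕ, 1 ≤ k → ω (p + k) = ω (p - k)) (j : ℕ) : ω (p + 1 + j) = eta j := by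
  obtain ⟨c, hc, hωc⟩ := hω.exists_isEtaPalindrome hsym (3 * 2 ^ (j + 1))
  have := Nat.lt_two_pow_self (n := j + 1)
  rw [← hc.eta_add_eq le_rfl Nat.lt_two_pow_self, add_assoc c, ← hωc (1 + j) (by omega),
    Nat.cast_add, Nat.cast_one, add_assoc]

end Symmetric

/-- If `ω ∈ Ω_τ` is symmetric around `p`, then `s = ω(p)` belongs to `{x,y,z}` and
`ω` is the translate by `p` of `ω⁽ˢ⁾`; equivalently, for every `n` the word
`ω(p+1)⋯ω(p+2^(n+1)-1)` equals `p⁽ⁿ⁾`. -/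
theorem symmetric_word (ω : ℤ → A) (hω : OmegaTau ω) (p : ℤ)
    (hsym : ∀ k : ℕ, 1 ≤ k → ω (p + k) = ω (p - k)) :
    ω p ∈ ({A.x, A.y, A.z} : Set A) ∧
    (∀ n : ℤ, ω n = omegaS (ω p) (n - p)) ∧
    (∀ n : ℕ, (List.range (2 ^ (n + 1) - 1)).map (fun k => ω (p + 1 + k)) = pw n) := by
  have hne := hω.ne_a_of_symm hsym
  have heta := hω.eq_eta_of_symm hsym
  refine ⟨?_, fun n => ?_, fun n => ?_⟩
  · cases h : ω p <;> simp_all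
  · rcases Int.eq_nat_or_neg (n - p) with ⟨_ | j, hk | hk⟩
    · simp [omegaS, show n = p by omega]
    · simp [omegaS, show n = p by omega]
    · rw [hk, Nat.cast_add_one, omegaS_natCast_add_one, ← heta]
      congr 1
      omega
    · rw [hk, omegaS_neg, Nat.cast_add_one, omegaS_natCast_add_one, ← heta,
        show n = p - ((j + 1 : ℕ) : ℤ) by omega, ← hsym (j + 1) (by omega)]
      congr 1
      push_cast
      ring
  · rw [map_range_natCast]
    simp only [heta]
    exact map_range_eta n
end
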